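/- Let N ≥ 1 and let s ∈ ℕ, s ≥ 1. Let μ and ν be Borel probability measures on ℝ^N whose characteristic functions φ_μ and φ_ν are s times differentiable at 0 and have equal derivatives at 0 up to order s − 1 (i.e. the iterated Fréchet derivatives of φ_μ and φ_ν at 0 agree for all orders k ≤ s − 1). Then d_s(μ, ν) < ∞. -/

import Mathlib

open MeasureTheory Filter Topology ENNReal

noncomputable def charFun' {N : ℕ} (μ : Measure (EuclideanSpace ℝ (Fin N)))
    (x : EuclideanSpace ℝ (Fin N)) : ℂ :=
  ∫ v, Complex.exp (-(((inner ℝ x v : ℝ) : ℂ) * Complex.I)) ∂μ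

noncomputable def dFourier {N : ℕ} (s : ℝ)
    (μ ν : Measure (EuclideanSpace ℝ (Fin N))) : ℝ≥0∞ :=
  ⨆ (x : EuclideanSpace ℝ (Fin N)) (_ : x ≠ 0),
    ENNReal.ofReal (‖charFun' μ x - charFun' ν x‖ / ‖x‖ ^ s)

/-!
The difference `φ_μ - φ_ν` is `C^s` at `0` and its derivatives of order `< s` vanish there.
Its derivative of order `s - 1` is differentiable at `0`, hence `O(‖x‖)`; each application of
the mean value inequality then descends one order while gaining one power of `‖x‖`, so
`φ_μ - φ_ν = O(‖x‖ ^ s)` near `0`. Away from `0` the ratio in `d_s` is bounded because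
characteristic functions have modulus at most `1`.
-/

open Asymptotics

section TaylorBigO

variable {E F : Type*} [NormedAddCommGroup E] [NormedSpace ℝ E]
  [NormedAddCommGroup F] [NormedSpace ℝ F] {f : E → F} {x₀ : E}

theorem isBigO_pow_succ_of_hasFDerivAt {f' : E → E →L[ℝ] F} {n : ℕ}
    (hff' : ∀ᶠ x in 𝓝 x₀, HasFDerivAt f (f' x) x)
    (hf' : f' =O[𝓝 x₀] fun x ↦ ‖x - x₀‖ ^ n) :
    (fun x ↦ f x - f x₀) =O[𝓝 x₀] fun x ↦ ‖x - x₀‖ ^ (n + 1) := by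
  obtain ⟨C, hC, hCf'⟩ := hf'.exists_nonneg
  obtain ⟨ε, hε, hball⟩ := Metric.eventually_nhds_iff_ball.1 (hff'.and hCf'.bound)
  refine IsBigO.of_bound C (eventually_of_mem (Metric.ball_mem_nhds x₀ hε) fun x hx ↦ ?_)
  have hseg : segment ℝ x₀ x ⊆ Metric.ball x₀ ε :=
    (convex_ball x₀ ε).segment_subset (Metric.mem_ball_self hε) hx
  have hbound : ∀ y ∈ segment ℝ x₀ x, ‖f' y‖ ≤ C * ‖x - x₀‖ ^ n := fun y hy ↦ by
    calc ‖f' y‖ ≤ C * ‖‖y - x₀‖ ^ n‖ := (hball y (hseg hy)).2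
      _ = C * ‖y - x₀‖ ^ n := by rw [norm_pow, norm_norm]
      _ ≤ C * ‖x - x₀‖ ^ n := by gcongr; exact norm_sub_le_of_mem_segment hy
  calc ‖f x - f x₀‖ ≤ C * ‖x - x₀‖ ^ n * ‖x - x₀‖ :=
        (convex_segment x₀ x).norm_image_sub_le_of_norm_hasFDerivWithin_le
          (fun y hy ↦ (hball y (hseg hy)).1.hasFDerivWithinAt) hbound
          (left_mem_segment ℝ x₀ x) (right_mem_segment ℝ x₀ x)
    _ = C * ‖‖x - x₀‖ ^ (n + 1)‖ := by rw [norm_pow, norm_norm, pow_succ, mul_assoc]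

theorem isBigO_iteratedFDeriv_of_iteratedFDeriv_eq_zero {k j : ℕ}
    (hf : ContDiffAt ℝ (k + j + 1 : ℕ) f x₀)
    (h : ∀ i, k ≤ i → i ≤ k + j → iteratedFDeriv ℝ i f x₀ = 0) :
    iteratedFDeriv ℝ k f =O[𝓝 x₀] fun x ↦ ‖x - x₀‖ ^ (j + 1) := by
  induction j generalizing k with
  | zero =>
    simpa [h k le_rfl le_rfl] using
      (hf.differentiableAt_iteratedFDeriv (m := k) (by norm_cast; omega)).isBigO_sub
  | succ j ih =>
    have hnext : iteratedFDeriv ℝ (k + 1) f =O[𝓝 x₀] fun x ↦ ‖x - x₀‖ ^ (j + 1) :=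
      ih (hf.of_le (by norm_cast; omega)) fun i hi hi' ↦ h i (by omega) (by omega)
    have hderiv : ∀ᶠ x in 𝓝 x₀, HasFDerivAt (iteratedFDeriv ℝ k f)
        (fderiv ℝ (iteratedFDeriv ℝ k f) x) x :=
      (hf.eventually (ENat.natCast_ne_coe_top _)).mono fun x hx ↦
        (hx.differentiableAt_iteratedFDeriv (by norm_cast; omega)).hasFDerivAt
    have hfderiv : fderiv ℝ (iteratedFDeriv ℝ k f) =O[𝓝 x₀] fun x ↦ ‖x - x₀‖ ^ (j + 1) :=
      (isBigO_of_le _ fun _ ↦ norm_fderiv_iteratedFDeriv.le).trans hnext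
    simpa [h k le_rfl (by omega)] using isBigO_pow_succ_of_hasFDerivAt hderiv hfderiv

theorem isBigO_pow_of_iteratedFDeriv_eq_zero {n : ℕ} (hf : ContDiffAt ℝ (n + 1 : ℕ) f x₀)
    (h : ∀ i ≤ n, iteratedFDeriv ℝ i f x₀ = 0) :
    f =O[𝓝 x₀] fun x ↦ ‖x - x₀‖ ^ (n + 1) :=
  (isBigO_of_le _ fun _ ↦ norm_iteratedFDeriv_zero.ge).trans <|
    isBigO_iteratedFDeriv_of_iteratedFDeriv_eq_zero (k := 0) (by simpa using hf)
      fun i _ hi ↦ h i (by omega)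

end TaylorBigO

theorem exists_forall_ne_zero_norm_div_rpow_le {E F : Type*} [NormedAddGroup E] [SeminormedAddGroup F]
    {g : E → F} {r B : ℝ} (hr : 0 ≤ r)
    (hB : ∀ x, ‖g x‖ ≤ B) (hg : g =O[𝓝 0] fun x ↦ ‖x‖ ^ r) :
    ∃ M, ∀ x ≠ 0, ‖g x‖ / ‖x‖ ^ r ≤ M := by
  obtain ⟨C, hC⟩ := hg.bound
  obtain ⟨ε, hε, hball⟩ := Metric.eventually_nhds_iff_ball.1 hC
  refine ⟨max C (B / ε ^ r), fun x hx ↦ ?_⟩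
  have hxr : 0 < ‖x‖ ^ r := Real.rpow_pos_of_pos (norm_pos_iff.2 hx) r
  rw [div_le_iff₀ hxr]
  rcases lt_or_ge ‖x‖ ε with hlt | hge
  · calc ‖g x‖ ≤ C * ‖‖x‖ ^ r‖ := hball x (by simpa using hlt)
      _ = C * ‖x‖ ^ r := by rw [Real.norm_of_nonneg hxr.le]
      _ ≤ max C (B / ε ^ r) * ‖x‖ ^ r := by gcongr; exact le_max_left _ _
  · have hεr : 0 < ε ^ r := Real.rpow_pos_of_pos hε r
    calc ‖g x‖ ≤ B / ε ^ r * ε ^ r := by rw [div_mul_cancel₀ _ hεr.ne']; exact hB x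
      _ ≤ max C (B / ε ^ r) * ‖x‖ ^ r := by
        have hB0 : 0 ≤ B := (norm_nonneg _).trans (hB x)
        gcongr
        exact le_max_right _ _

theorem charFun'_eq_charFun_neg {N : ℕ} (μ : Measure (EuclideanSpace ℝ (Fin N)))
    (x : EuclideanSpace ℝ (Fin N)) : charFun' μ x = charFun μ (-x) := by
  simp [charFun', charFun_apply, inner_neg_right, real_inner_comm]

theorem norm_charFun'_sub_charFun'_le_two {N : ℕ} (μ ν : Measure (EuclideanSpace ℝ (Fin N)))
    [IsProbabilityMeasure μ] [IsProbabilityMeasure ν] (x : EuclideanSpace ℝ (Fin N)) :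
    ‖charFun' μ x - charFun' ν x‖ ≤ 2 := by
  rw [charFun'_eq_charFun_neg, charFun'_eq_charFun_neg]
  linarith [norm_sub_le (charFun μ (-x)) (charFun ν (-x)), norm_charFun_le_one (μ := μ) (-x),
    norm_charFun_le_one (μ := ν) (-x)]

theorem dFourier_lt_top_of_isBigO {N : ℕ} {s : ℝ} (hs : 0 ≤ s)
    (μ ν : Measure (EuclideanSpace ℝ (Fin N))) [IsProbabilityMeasure μ] [IsProbabilityMeasure ν]
    (h : (fun x ↦ charFun' μ x - charFun' ν x) =O[𝓝 0] fun x ↦ ‖x‖ ^ s) :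
    dFourier s μ ν < ⊤ := by
  obtain ⟨M, hM⟩ :=
    exists_forall_ne_zero_norm_div_rpow_le hs (norm_charFun'_sub_charFun'_le_two μ ν) h
  exact (iSup₂_le fun x hx ↦ ENNReal.ofReal_le_ofReal (hM x hx)).trans_lt ENNReal.ofReal_lt_top

theorem dFourier_lt_top_of_eq_derivs_int_general (N : ℕ)
    (s : ℕ) (hs : 1 ≤ s)
    (μ ν : Measure (EuclideanSpace ℝ (Fin N)))
    (hμprob : IsProbabilityMeasure μ) (hνprob : IsProbabilityMeasure ν)
    (hμd : ContDiffAt ℝ (s : ℕ∞) (charFun' μ) 0)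
    (hνd : ContDiffAt ℝ (s : ℕ∞) (charFun' ν) 0)
    (heq : ∀ k : ℕ, k ≤ s - 1 →
      iteratedFDeriv ℝ k (charFun' μ) 0 = iteratedFDeriv ℝ k (charFun' ν) 0) :
    dFourier (s : ℝ) μ ν < ⊤ := by
  obtain ⟨t, rfl⟩ : ∃ t, s = t + 1 := ⟨s - 1, by omega⟩
  have hderiv : ∀ k ≤ t, iteratedFDeriv ℝ k (fun x ↦ charFun' μ x - charFun' ν x) 0 = 0 :=
    fun k hk ↦ by
      have hk' : ((k : ℕ) : WithTop ℕ∞) ≤ ((t + 1 : ℕ) : ℕ∞) := by norm_cast; omega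
      rw [fun_iteratedFDeriv_sub_apply (hμd.of_le hk') (hνd.of_le hk'), heq k (by omega),
        sub_self]
  have hO := isBigO_pow_of_iteratedFDeriv_eq_zero (by exact_mod_cast hμd.sub hνd) hderiv
  exact dFourier_lt_top_of_isBigO (by positivity) μ ν (by simpa only [Real.rpow_natCast, sub_zero] using hO)

/-- For integer s ≥ 1, if the characteristic functions of μ and ν are s times
differentiable at 0 with equal iterated Fréchet derivatives at 0 up to order
s − 1, then d_s(μ,ν) < ∞. -/
theorem dFourier_lt_top_of_eq_derivs_int (N : ℕ) (hN : 1 ≤ N)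
    (s : ℕ) (hs : 1 ≤ s)
    (μ ν : Measure (EuclideanSpace ℝ (Fin N)))
    (hμprob : IsProbabilityMeasure μ) (hνprob : IsProbabilityMeasure ν)
    (hμd : ContDiffAt ℝ (s : ℕ∞) (charFun' μ) 0)
    (hνd : ContDiffAt ℝ (s : ℕ∞) (charFun' ν) 0)
    (heq : ∀ k : ℕ, k ≤ s - 1 →
      iteratedFDeriv ℝ k (charFun' μ) 0 = iteratedFDeriv ℝ k (charFun' ν) 0) :
    dFourier (s : ℝ) μ ν < ⊤ :=
  dFourier_lt_top_of_eq_derivs_int_general N s hs μ ν hμprob hνprob hμd hνd heq
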